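/- For all integers r > 0 and n ≥ 0, σmex_r(n) = Σ_{j ≥ 0} p(n − r·j(j+1)/2), where σmex_r(n) is the sum over all partitions λ of n of the least positive integer that does not appear at least r times as a part of λ. -/

import Mathlib

open scoped Classical

/-- The minimal excludant of a partition: the least positive integer not a part. -/
noncomputable def Nat.Partition.mex {n : ℕ} (l : n.Partition) : ℕ :=
  sInf {k : ℕ | 0 < k ∧ k ∉ l.parts}

/-- Sum of minimal excludants over all partitions of `n`. -/
noncomputable def sigmaMex (n : ℕ) : ℕ := ∑ l : Nat.Partition n, l.mex

/-- `sigmaMex` extended to ℤ by zero on negatives. -/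
noncomputable def sigmaMexZ (n : ℤ) : ℤ := if 0 ≤ n then sigmaMex n.toNat else 0

/-- The partition function, extended to ℤ by zero on negatives. -/
noncomputable def partitionsZ (n : ℤ) : ℤ :=
  if 0 ≤ n then Fintype.card (Nat.Partition n.toNat) else 0

/-- `M_k(n)`: partitions of `n` whose mex is `k` with more parts `> k` than parts `< k`. -/
noncomputable def Mfun (k n : ℕ) : ℕ :=
  Nat.card {l : Nat.Partition n //
    l.mex = k ∧ (l.parts.filter fun t => t < k).card < (l.parts.filter fun t => k < t).card}

noncomputable def MfunZ (k : ℕ) (n : ℤ) : ℤ := if 0 ≤ n then Mfun k n.toNat else 0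

/-- A multiset of colored parts is a colored partition of `n`. -/
def IsColoredPartition {c : ℕ} (n : ℕ) (m : Multiset (ℕ × Fin c)) : Prop :=
  (∀ p ∈ m, 0 < p.1) ∧ (m.map Prod.fst).sum = n

/-- Number of partitions of `n` into distinct two-colored parts. -/
noncomputable def D2 (n : ℕ) : ℕ :=
  Nat.card {m : Multiset (ℕ × Fin 2) // IsColoredPartition n m ∧ m.Nodup}

/-- Number of partitions of `n` into distinct parts. -/
def D1 (n : ℕ) : ℕ := (Nat.Partition.distincts n).card

/-- Indicator of triangular numbers. -/
noncomputable def deltaTri (n : ℤ) : ℤ := if ∃ m : ℤ, 2 * n = m * (m + 1) then 1 else 0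

/-- `δ'(n) = (-1)^m` if `n = m(3m-1)` for some integer `m`, else `0`. -/
noncomputable def deltaPent (n : ℤ) : ℤ :=
  ∑' m : ℤ, if n = m * (3 * m - 1) then (if Even m then (1 : ℤ) else -1) else 0

/-- Overpartition: positive parts summing to `n`, overlined (`true`) parts occur at most once
per size. -/
def IsOverpartition (n : ℕ) (m : Multiset (ℕ × Bool)) : Prop :=
  (∀ p ∈ m, 0 < p.1) ∧ (m.map Prod.fst).sum = n ∧ ∀ s : ℕ, m.count (s, true) ≤ 1

/-- Overpartitions of `n` in which the largest part size exceeding `k` appears at least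
`k+1` times. -/
noncomputable def Mbar (k n : ℕ) : ℕ :=
  Nat.card {m : Multiset (ℕ × Bool) // IsOverpartition n m ∧
    ∃ s ∈ m.map Prod.fst, k < s ∧ (∀ t ∈ m.map Prod.fst, k < t → t ≤ s) ∧
      k + 1 ≤ (m.map Prod.fst).count s}

noncomputable def MbarZ (k : ℕ) (n : ℤ) : ℤ := if 0 ≤ n then Mbar k n.toNat else 0

/-- `D₂*(n)`: two-colored distinct partitions with gap-free color-0 parts and even
color-1 parts. -/
noncomputable def D2star (n : ℕ) : ℕ :=
  Nat.card {m : Multiset (ℕ × Fin 2) // IsColoredPartition n m ∧ m.Nodup ∧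
    (∃ j : ℕ, (m.filter fun p => p.2 = 0).map Prod.fst = (Multiset.range j).map (· + 1)) ∧
    ∀ p ∈ m, p.2 = 1 → Even p.1}

/-- Partitions of `n` in which odd parts are not repeated. -/
noncomputable def pod (n : ℕ) : ℕ :=
  Nat.card {l : Nat.Partition n // ∀ t : ℕ, Odd t → l.parts.count t ≤ 1}

/-- `MP_k(n)`: partitions where the largest part exceeding `2k-1` is odd and appears
exactly `k` times, all other odd parts appearing at most once. -/
noncomputable def MPfun (k n : ℕ) : ℕ :=
  Nat.card {l : Nat.Partition n // ∃ s ∈ l.parts, 2 * k - 1 < s ∧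
    (∀ t ∈ l.parts, 2 * k - 1 < t → t ≤ s) ∧ Odd s ∧ l.parts.count s = k ∧
    ∀ t ∈ l.parts, Odd t → t ≠ s → l.parts.count t ≤ 1}

/-- The `r`-gap of a partition: least positive integer appearing fewer than `r` times. -/
noncomputable def Nat.Partition.rgap {n : ℕ} (r : ℕ) (l : n.Partition) : ℕ :=
  sInf {k : ℕ | 0 < k ∧ l.parts.count k < r}

/-- Sum of the `r`-gaps of all partitions of `n`. -/
noncomputable def sigmaMexR (r n : ℕ) : ℕ := ∑ l : Nat.Partition n, l.rgap r

/-- Two-colored partitions: color-0 parts distinct and divisible by `r`; each color-1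
part size occurs at most `2r-1` times. -/
noncomputable def Dtilde (r n : ℕ) : ℕ :=
  Nat.card {m : Multiset (ℕ × Fin 2) // IsColoredPartition n m ∧
    (m.filter fun p => p.2 = 0).Nodup ∧ (∀ p ∈ m, p.2 = 0 → r ∣ p.1) ∧
    ∀ s : ℕ, m.count (s, 1) ≤ 2 * r - 1}

/-- `D₁(x/2)` when `x` is a non-negative even integer, `0` otherwise. -/
noncomputable def D1half (x : ℤ) : ℤ := if 0 ≤ x ∧ 2 ∣ x then D1 (x / 2).toNat else 0

/-- `j = |r| - 1/2 + sign(r)·(-1)^r/2`. -/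
def jOf (r : ℤ) : ℤ :=
  if 0 ≤ r then (if Even r then r else r - 1) else (if Even r then -r - 1 else -r)

/-- `D₃^{(k)}(n)`: three-colored distinct partitions satisfying the conditions of
Proposition 3.2. -/
noncomputable def D3 (k n : ℕ) : ℕ :=
  Nat.card {m : Multiset (ℕ × Fin 3) // IsColoredPartition n m ∧ m.Nodup ∧
    (m.filter fun p => p.2 = 2).card = k ∧
    (1 < k → ∀ a ∈ (m.filter fun p => p.2 = 2).map Prod.fst,
        ∀ b ∈ (m.filter fun p => p.2 = 2).map Prod.fst, b < 2 * a) ∧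
    ∃ a b : ℕ,
      a ∈ (m.filter fun p => (p.2 : ℕ) =
        (jOf (((m.filter fun q => q.2 = 0).card : ℤ) -
          ((m.filter fun q => q.2 = 1).card : ℤ)) % 2).toNat).map Prod.fst ∧
      (∀ t ∈ (m.filter fun p => (p.2 : ℕ) =
        (jOf (((m.filter fun q => q.2 = 0).card : ℤ) -
          ((m.filter fun q => q.2 = 1).card : ℤ)) % 2).toNat).map Prod.fst, t ≤ a) ∧
      b ∈ (m.filter fun p => p.2 = 2).map Prod.fst ∧
      (∀ t ∈ (m.filter fun p => p.2 = 2).map Prod.fst, b ≤ t) ∧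
      (a : ℤ) = jOf (((m.filter fun q => q.2 = 0).card : ℤ) -
          ((m.filter fun q => q.2 = 1).card : ℤ)) + b}

/-! `rgap λ > j` exactly when each of `1, …, j` occurs at least `r` times in `λ`, i.e. when
`λ` contains the staircase `r • {1, …, j}` of size `r * j(j+1)/2`; removing it is a bijection
onto the partitions of `n - r * j(j+1)/2`. Writing `rgap λ = #{j | j < rgap λ}` and exchanging
the two summations gives the formula. -/

open Finset

theorem Finset.sum_eq_sum_range_card_lt {α : Type*} (s : Finset α) (f : α → ℕ) {N : ℕ}
    (hf : ∀ x ∈ s, f x ≤ N) : ∑ x ∈ s, f x = ∑ j ∈ range N, #{x ∈ s | j < f x} := by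
  simp_rw [card_filter]
  rw [sum_comm]
  refine sum_congr rfl fun x hx => ?_
  have hfilter : {j ∈ range N | j < f x} = range (f x) := by
    ext j
    simp only [mem_filter, mem_range, and_iff_right_iff_imp]
    exact fun hj => hj.trans_le (hf x hx)
  rw [← card_filter, hfilter, card_range]

theorem Finset.sum_Icc_one_id (j : ℕ) : ∑ i ∈ Icc 1 j, i = j * (j + 1) / 2 := by
  have h : insert 0 (Icc 1 j) = range (j + 1) := by
    rw [Nat.range_succ_eq_Icc_zero]
    exact insert_Icc_add_one_left_eq_Icc (Nat.zero_le j)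
  rw [← sum_insert_zero (a := 0) (by simp), h, sum_range_id, Nat.add_sub_cancel, mul_comm]

def staircase (r j : ℕ) : Multiset ℕ := r • (Icc 1 j).val

theorem count_staircase (r j k : ℕ) :
    (staircase r j).count k = if k ∈ Icc 1 j then r else 0 := by
  simp only [staircase, Multiset.count_nsmul, Multiset.count_eq_of_nodup (Icc 1 j).nodup, mem_val]
  split_ifs <;> simp

theorem pos_of_mem_staircase {r j k : ℕ} (h : k ∈ staircase r j) : 0 < k :=
  (mem_Icc.1 (Multiset.mem_nsmul.1 h).2 : 1 ≤ k ∧ k ≤ j).1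

theorem sum_staircase (r j : ℕ) : (staircase r j).sum = r * (j * (j + 1) / 2) := by
  rw [staircase, Multiset.sum_nsmul, smul_eq_mul, ← sum_Icc_one_id, sum_eq_multiset_sum,
    Multiset.map_id']

theorem staircase_le_iff {r j : ℕ} {s : Multiset ℕ} :
    staircase r j ≤ s ↔ ∀ k ∈ Icc 1 j, r ≤ s.count k := by
  simp only [Multiset.le_iff_count, count_staircase]
  refine forall_congr' fun k => ?_
  split_ifs with hk <;> simp [hk]

namespace Nat.Partition

theorem sum_le_of_le_parts {n : ℕ} {p : n.Partition} {s : Multiset ℕ} (h : s ≤ p.parts) :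
    s.sum ≤ n := by
  rw [← p.parts_sum, ← tsub_add_cancel_of_le h, Multiset.sum_add]
  exact Nat.le_add_left _ _

def partitionWithPartsEquiv {n : ℕ} {s : Multiset ℕ} (hs : ∀ a ∈ s, 0 < a)
    (hn : s.sum ≤ n) : {p : n.Partition // s ≤ p.parts} ≃ (n - s.sum).Partition where
  toFun p := ⟨p.1.parts - s,
    fun hi => p.1.parts_pos (Multiset.mem_of_le (Multiset.sub_le_self _ _) hi), by
      have := congrArg Multiset.sum (tsub_add_cancel_of_le p.2)
      rw [Multiset.sum_add, p.1.parts_sum] at this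
      omega⟩
  invFun q := ⟨⟨q.parts + s, fun hi => (Multiset.mem_add.1 hi).elim q.parts_pos (hs _), by
      rw [Multiset.sum_add, q.parts_sum]
      omega⟩, Multiset.le_add_left _ _⟩
  left_inv p := Subtype.ext <| Partition.ext <| tsub_add_cancel_of_le p.2
  right_inv q := Partition.ext <| add_tsub_cancel_right _ _

theorem card_filter_le_parts {n : ℕ} {s : Multiset ℕ} (hs : ∀ a ∈ s, 0 < a) :
    (#{p : n.Partition | s ≤ p.parts} : ℤ) = partitionsZ (n - s.sum) := by
  rw [← Fintype.card_subtype, partitionsZ]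
  by_cases hn : s.sum ≤ n
  · have hsub : ((n : ℤ) - s.sum).toNat = n - s.sum := by omega
    rw [Fintype.card_congr (partitionWithPartsEquiv hs hn), if_pos (by omega), hsub]
  · have : IsEmpty {p : n.Partition // s ≤ p.parts} := ⟨fun p => hn (sum_le_of_le_parts p.2)⟩
    rw [Fintype.card_eq_zero, if_neg (by omega), Nat.cast_zero]

theorem count_succ_eq_zero {n : ℕ} (l : n.Partition) : l.parts.count (n + 1) = 0 :=
  Multiset.count_eq_zero.2 fun h => (le_of_mem_parts h).not_gt n.lt_succ_self

theorem rgap_le_succ {n r : ℕ} (hr : 0 < r) (l : n.Partition) : l.rgap r ≤ n + 1 :=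
  Nat.sInf_le ⟨n.succ_pos, l.count_succ_eq_zero ▸ hr⟩

theorem lt_rgap_iff {n r : ℕ} (hr : 0 < r) (l : n.Partition) (j : ℕ) :
    j < l.rgap r ↔ ∀ k ∈ Icc 1 j, r ≤ l.parts.count k := by
  have hne : {k : ℕ | 0 < k ∧ l.parts.count k < r}.Nonempty :=
    ⟨n + 1, n.succ_pos, l.count_succ_eq_zero ▸ hr⟩
  rw [rgap, Nat.lt_iff_add_one_le, le_csInf_iff' hne]
  simp only [mem_lowerBounds, Set.mem_ofPred_eq, mem_Icc]
  exact ⟨fun h k hk => by grind, fun h k hk => by grind⟩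

theorem card_filter_lt_rgap {r : ℕ} (hr : 0 < r) (n j : ℕ) :
    (#{l : n.Partition | j < l.rgap r} : ℤ) =
      partitionsZ ((n : ℤ) - r * (j * (j + 1) / 2)) := by
  simp_rw [lt_rgap_iff hr, ← staircase_le_iff]
  rw [card_filter_le_parts fun _ => pos_of_mem_staircase, sum_staircase]
  push_cast [Int.natCast_ediv]
  rfl

end Nat.Partition

theorem stmt15 (r n : ℕ) (hr : 0 < r) :
    (sigmaMexR r n : ℤ) = ∑' j : ℕ, partitionsZ ((n : ℤ) - r * (j * (j + 1) / 2)) := by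
  have hlayer : sigmaMexR r n = ∑ j ∈ range (n + 1), #{l : n.Partition | j < l.rgap r} :=
    sum_eq_sum_range_card_lt _ _ fun l _ => Nat.Partition.rgap_le_succ hr l
  have hvanish (j : ℕ) (hj : j ∉ range (n + 1)) : #{l : n.Partition | j < l.rgap r} = 0 := by
    have hnj : n + 1 ≤ j := by simpa using hj
    exact card_eq_zero.2 <| filter_eq_empty_iff.2 fun l _ =>
      ((Nat.Partition.rgap_le_succ hr l).trans hnj).not_gt
  simp_rw [← Nat.Partition.card_filter_lt_rgap hr]
  rw [tsum_eq_sum (s := range (n + 1)) fun j hj => by rw [hvanish j hj, Nat.cast_zero], hlayer,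
    Nat.cast_sum]
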